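/- There exists a binary sequence x ∈ {0,1}^ℕ that is typical but not normal in base 2; i.e. the set TpcN ∖ Normal is nonempty. -/

import Mathlib

open Filter

open Classical in
/-- `L_n(x)`: the maximal length of a run of consecutive ones among the first `n`
digits (positions `1,…,n`) of the binary sequence `x`. -/
noncomputable def runL (x : ℕ → Bool) (n : ℕ) : ℕ :=
  Nat.findGreatest
    (fun j => ∃ i, i + j ≤ n ∧ ∀ k, 1 ≤ k → k ≤ j → x (i + k) = true) n

/-- A binary sequence is typical if `L_n(x)/log₂ n → 1`. -/
def Typical (x : ℕ → Bool) : Prop :=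
  Tendsto (fun n : ℕ => (runL x n : ℝ) / Real.logb 2 (n : ℝ)) atTop (nhds 1)

/-- `N(x, w, n)`: the number of occurrences of the block `w` in `x` starting at
a position `i` with `1 ≤ i ≤ n`. -/
def occCount (x : ℕ → Bool) (w : List Bool) (n : ℕ) : ℕ :=
  ((Finset.Icc 1 n).filter
    (fun i => ∀ k ∈ Finset.range w.length, x (i + k) = w.getD k false)).card

/-- A binary sequence is normal in base 2 if every nonempty block `w` appears
with frequency `2^{-|w|}`. -/
def NormalBaseTwo (x : ℕ → Bool) : Prop :=
  ∀ w : List Bool, w ≠ [] →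
    Tendsto (fun n : ℕ => (occCount x w n : ℝ) / (n : ℝ)) atTop
      (nhds (1 / 2 ^ w.length))

/-! The sequence `blockSeq` has its ones exactly on the blocks `[2^m, 2^m + m)`, `m ≥ 1`.
Consecutive blocks are separated by zeros, so the longest run of ones among the first `n`
digits has length `⌊log₂ n⌋` or `⌊log₂ n⌋ - 1`, and the sequence is typical. But at most
`⌊log₂ n⌋²` of the first `n` digits are ones, so the digit `1` has frequency `0`,
not `1/2`. -/

open Finset Asymptotics

theorem tendsto_div_nhds_one_of_abs_sub_le {α : Type*} {l : Filter α} {f g : α → ℝ} {C : ℝ}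
    (hg : Tendsto g l atTop) (hfg : ∀ᶠ a in l, |f a - g a| ≤ C) :
    Tendsto (fun a => f a / g a) l (nhds 1) := by
  have hbdd : (f - g) =O[l] (fun _ => (1 : ℝ)) :=
    IsBigO.of_bound C (hfg.mono fun a h => by simpa using h)
  have hone : (fun _ => (1 : ℝ)) =o[l] g :=
    (isLittleO_one_left_iff ℝ).2 (tendsto_norm_atTop_atTop.comp hg)
  have hequiv : f ~[l] g := (hbdd.trans_isLittleO hone).isEquivalent
  exact (isEquivalent_iff_tendsto_one (hg.eventually_ne_atTop 0)).1 hequiv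

theorem Nat.tendsto_log_atTop {b : ℕ} (hb : 1 < b) : Tendsto (Nat.log b) atTop atTop :=
  tendsto_atTop_atTop.2 fun m => ⟨b ^ m, fun _ => Nat.le_log_of_pow_le hb⟩

theorem Nat.log_two_eq_of_le_pow_add {m i : ℕ} (h₁ : 2 ^ m ≤ i) (h₂ : i ≤ 2 ^ m + m) :
    Nat.log 2 i = m := by
  refine Nat.log_eq_of_pow_le_of_lt_pow h₁ ?_
  have := Nat.lt_two_pow_self (n := m)
  rw [pow_succ]
  omega

open Classical in
theorem le_runL {x : ℕ → Bool} {n i j : ℕ} (hij : i + j ≤ n)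
    (hrun : ∀ k, 1 ≤ k → k ≤ j → x (i + k) = true) : j ≤ runL x n :=
  Nat.le_findGreatest (by omega) ⟨i, hij, hrun⟩

open Classical in
theorem exists_run_runL (x : ℕ → Bool) (n : ℕ) :
    ∃ i, i + runL x n ≤ n ∧ ∀ k, 1 ≤ k → k ≤ runL x n → x (i + k) = true :=
  Nat.findGreatest_spec
    (P := fun j => ∃ i, i + j ≤ n ∧ ∀ k, 1 ≤ k → k ≤ j → x (i + k) = true)
    (Nat.zero_le n) ⟨0, by simp, fun k hk₁ hk₂ => by omega⟩

theorem occCount_singleton_true (x : ℕ → Bool) (n : ℕ) :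
    occCount x [true] n = #{i ∈ Icc 1 n | x i = true} := by
  simp [occCount]

theorem not_normalBaseTwo_of_tendsto_card_ones_div {x : ℕ → Bool}
    (h : Tendsto (fun n => (#{i ∈ Icc 1 n | x i = true} : ℝ) / n) atTop (nhds 0)) :
    ¬ NormalBaseTwo x := by
  intro hx
  have hfreq := hx [true] (List.cons_ne_nil _ _)
  simp only [occCount_singleton_true, List.length_singleton] at hfreq
  have := tendsto_nhds_unique h hfreq
  norm_num at this

def blockSeq (i : ℕ) : Bool :=
  decide (i - 2 ^ Nat.log 2 i < Nat.log 2 i)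

theorem blockSeq_eq_true_iff {i : ℕ} :
    blockSeq i = true ↔ ∃ m, 2 ^ m ≤ i ∧ i < 2 ^ m + m := by
  constructor
  · intro h
    have hi : i ≠ 0 := by rintro rfl; simp [blockSeq] at h
    have := Nat.pow_log_le_self 2 hi
    simp only [blockSeq, decide_eq_true_eq] at h
    exact ⟨Nat.log 2 i, this, by omega⟩
  · rintro ⟨m, h₁, h₂⟩
    simp only [blockSeq, Nat.log_two_eq_of_le_pow_add h₁ h₂.le, decide_eq_true_eq]
    omega

theorem blockSeq_pow_add_self (m : ℕ) : blockSeq (2 ^ m + m) = false := by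
  simp [blockSeq, Nat.log_two_eq_of_le_pow_add le_self_add le_rfl]

theorem runL_blockSeq_le (n : ℕ) : runL blockSeq n ≤ Nat.log 2 n := by
  obtain ⟨i, hin, hrun⟩ := exists_run_runL blockSeq n
  set j := runL blockSeq n
  rcases Nat.eq_zero_or_pos j with hj | hj
  · omega
  obtain ⟨m, hm₁, hm₂⟩ := blockSeq_eq_true_iff.1 (hrun 1 le_rfl hj)
  have hend : i + j < 2 ^ m + m := by
    by_contra! h
    have hgap := hrun (2 ^ m + m - i) (by omega) (by omega)
    rw [show i + (2 ^ m + m - i) = 2 ^ m + m by omega, blockSeq_pow_add_self] at hgap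
    exact Bool.false_ne_true hgap
  have : m ≤ Nat.log 2 n := Nat.le_log_of_pow_le one_lt_two (by omega)
  omega

theorem log_two_sub_one_le_runL_blockSeq (n : ℕ) : Nat.log 2 n - 1 ≤ runL blockSeq n := by
  set N := Nat.log 2 n
  rcases Nat.eq_zero_or_pos N with hN | hN
  · omega
  have hn : 2 ^ N ≤ n := Nat.pow_log_le_self 2 (by rintro rfl; simp [N] at hN)
  have hsplit : 2 ^ N = 2 ^ (N - 1) + 2 ^ (N - 1) := by
    rw [← two_mul, ← pow_succ']
    congr
    omega
  have := Nat.lt_two_pow_self (n := N - 1)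
  have := Nat.one_le_two_pow (n := N - 1)
  exact le_runL (i := 2 ^ (N - 1) - 1) (by omega)
    fun k hk₁ hk₂ => blockSeq_eq_true_iff.2 ⟨N - 1, by omega, by omega⟩

theorem abs_runL_blockSeq_sub_logb_le (n : ℕ) :
    |(runL blockSeq n : ℝ) - Real.logb 2 n| ≤ 2 := by
  have hlog₁ : (Nat.log 2 n : ℝ) ≤ Real.logb 2 n := by exact_mod_cast Real.natLog_le_logb n 2
  have hlog₂ : Real.logb 2 n < Nat.log 2 n + 1 := by
    have := Nat.lt_floor_add_one (Real.logb 2 n)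
    rwa [show (2 : ℝ) = (2 : ℕ) by norm_num, Real.natFloor_logb_natCast] at this
  have hrun₁ : (Nat.log 2 n : ℝ) ≤ runL blockSeq n + 1 := by
    exact_mod_cast (by have := log_two_sub_one_le_runL_blockSeq n; omega)
  have hrun₂ : (runL blockSeq n : ℝ) ≤ Nat.log 2 n := by exact_mod_cast runL_blockSeq_le n
  rw [abs_le]
  constructor <;> linarith

theorem typical_blockSeq : Typical blockSeq :=
  tendsto_div_nhds_one_of_abs_sub_le
    ((Real.tendsto_logb_atTop one_lt_two).comp tendsto_natCast_atTop_atTop)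
    (Eventually.of_forall abs_runL_blockSeq_sub_logb_le)

theorem card_blockSeq_ones_le (n : ℕ) :
    #{i ∈ Icc 1 n | blockSeq i = true} ≤ Nat.log 2 n ^ 2 := by
  set N := Nat.log 2 n
  have hsub : {i ∈ Icc 1 n | blockSeq i = true} ⊆
      (Icc 1 N ×ˢ range N).image fun p => 2 ^ p.1 + p.2 := by
    intro i hi
    simp only [mem_filter, mem_Icc, blockSeq, decide_eq_true_eq] at hi
    have hpow := Nat.pow_log_le_self 2 (by omega : i ≠ 0)
    have hmono : Nat.log 2 i ≤ N := Nat.log_mono_right hi.1.2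
    simp only [mem_image, mem_product, mem_Icc, mem_range, Prod.exists]
    exact ⟨Nat.log 2 i, i - 2 ^ Nat.log 2 i, ⟨⟨by omega, hmono⟩, by omega⟩, by omega⟩
  calc #{i ∈ Icc 1 n | blockSeq i = true}
      ≤ #(Icc 1 N ×ˢ range N) := (card_le_card hsub).trans card_image_le
    _ = N ^ 2 := by simp [sq]

theorem tendsto_card_blockSeq_ones_div :
    Tendsto (fun n => (#{i ∈ Icc 1 n | blockSeq i = true} : ℝ) / n) atTop (nhds 0) := by
  refine squeeze_zero' (Eventually.of_forall fun n => by positivity) ?_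
    ((tendsto_pow_const_div_const_pow_of_one_lt 2 one_lt_two).comp
      (Nat.tendsto_log_atTop one_lt_two))
  filter_upwards [eventually_ne_atTop 0] with n hn
  have hpow : (2 : ℝ) ^ Nat.log 2 n ≤ n := by exact_mod_cast Nat.pow_log_le_self 2 hn
  have hcard : (#{i ∈ Icc 1 n | blockSeq i = true} : ℝ) ≤ Nat.log 2 n ^ 2 := by
    exact_mod_cast card_blockSeq_ones_le n
  exact div_le_div₀ (by positivity) hcard (by positivity) hpow

/-- There is a binary sequence that is typical but not normal in base 2:
`TpcN ∖ Normal ≠ ∅`. -/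
theorem typical_not_normal_nonempty :
    ∃ x : ℕ → Bool, Typical x ∧ ¬ NormalBaseTwo x :=
  ⟨blockSeq, typical_blockSeq,
    not_normalBaseTwo_of_tendsto_card_ones_div tendsto_card_blockSeq_ones_div⟩
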